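/- arXiv:2306.06816 — 4 statements merged into one kernel-verified Lean document; each statement's English description precedes it below -/
import Mathlib

section
/- Empirical-measure fluctuation estimate (Lemma before Theorem 2.9, inequality (RR1)): There is a universal constant C > 0 with the following property. Let ξ₁, …, ξ_N be i.i.d. ℝ^d-valued random variables with common law μ, let μ_{ξ^N} := (1/N) Σ_{j=1}^N δ_{ξ_j} be their empirical measure, let μ̄ be any Borel probability measure on ℝ^d, and let f : ℝ^d × ℝ^d → [0,∞) be measurable. Writing f(x, η) := ∫_{ℝ^d} f(x,y) η(dy) for a probability measure η, one has for every i = 1, …, N (the inequality being in [0,∞]): E| f(ξ_i, μ_{ξ^N}) − f(ξ_i, μ̄) |² ≤ C [ ∫_{ℝ^d} (f(x,μ) − f(x,μ̄))² μ(dx) + (1/N) ∫_{ℝ^d}∫_{ℝ^d} f(x,y)² μ(dx) μ(dy) + (1/N) ∫_{ℝ^d} ( ∫_{ℝ^d} f(x,y) μ̄(dy) )² μ(dx) + (1/N) ∫_{ℝ^d} f(x,x)² μ(dx) ]. In particular, taking μ̄ = μ, E| f(ξ_i, μ_{ξ^N}) − f(ξ_i, μ) |² ≤ (C/N) ( ∫∫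 f(x,y)² μ(dx)μ(dy) + ∫ f(x,x)² μ(dx) ). -/
/-!
Write `g x = ∫ f x y ∂μ`, `h x = ∫ f x y ∂μ̄` and `F x y = f x y - g x`. Since
`∫ f (ξ i) · ∂μ_{ξ^N} = N⁻¹ ∑ⱼ f (ξ i) (ξ j)`, the error splits as
`(g - h)(ξ i) + N⁻¹ ∑_{j ≠ i} F (ξ i) (ξ j) + N⁻¹ F (ξ i) (ξ i)`.
The first term has second moment `∫ (g - h)² dμ`. For distinct `j, k ≠ i` the triple
`(ξ i, ξ j, ξ k)` has law `μ ⊗ μ ⊗ μ` and `F x` is `μ`-centred, so the summands of the middle term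
are orthogonal in `L²(P)` and its second moment is `(N - 1) N⁻² ∬ F² ≤ N⁻¹ ∬ f²`. The diagonal
term is controlled by `∫ f(x,x)² dμ` and, through Jensen, by `∬ f²`. Then
`(a + b + c)² ≤ 3 (a² + b² + c²)` gives the estimate with `C = 9`.
-/

open MeasureTheory ProbabilityTheory
open scoped ENNReal

noncomputable section

universe u

section Moments

variable {α : Type*} [MeasurableSpace α] {μ : Measure α}

lemma memLp_two_iff_lintegral_ofReal_sq_ne_top {φ : α → ℝ} (hφ : AEStronglyMeasurable φ μ) :
    MemLp φ 2 μ ↔ ∫⁻ x, ENNReal.ofReal (φ x ^ 2) ∂μ ≠ ∞ := by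
  rw [memLp_two_iff_integrable_sq hφ]
  exact (lintegral_ofReal_ne_top_iff_integrable (hφ.pow 2)
    (ae_of_all _ fun _ => sq_nonneg _)).symm

variable [IsProbabilityMeasure μ]

lemma ofReal_sq_integral_le_lintegral {φ : α → ℝ} (hφ : AEStronglyMeasurable φ μ) :
    ENNReal.ofReal ((∫ x, φ x ∂μ) ^ 2) ≤ ∫⁻ x, ENNReal.ofReal (φ x ^ 2) ∂μ := by
  by_cases h : MemLp φ 2 μ
  · have hvar := variance_nonneg φ μ
    rw [variance_eq_sub h] at hvar
    rw [← ofReal_integral_eq_lintegral_ofReal h.integrable_sq (ae_of_all _ fun _ => sq_nonneg _)]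
    exact ENNReal.ofReal_le_ofReal (by simpa using hvar)
  · rw [memLp_two_iff_lintegral_ofReal_sq_ne_top hφ, not_not] at h
    simp [h]

lemma lintegral_ofReal_sq_sub_integral_le {φ : α → ℝ} (hφ : AEStronglyMeasurable φ μ) :
    ∫⁻ x, ENNReal.ofReal ((φ x - ∫ y, φ y ∂μ) ^ 2) ∂μ ≤ ∫⁻ x, ENNReal.ofReal (φ x ^ 2) ∂μ := by
  by_cases h : MemLp φ 2 μ
  · have hvar := variance_le_expectation_sq hφ
    rw [variance_eq_integral hφ.aemeasurable] at hvar
    have hc : Integrable (fun x => (φ x - ∫ y, φ y ∂μ) ^ 2) μ :=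
      (h.sub (memLp_const _)).integrable_sq
    rw [← ofReal_integral_eq_lintegral_ofReal h.integrable_sq (ae_of_all _ fun _ => sq_nonneg _),
      ← ofReal_integral_eq_lintegral_ofReal hc (ae_of_all _ fun _ => sq_nonneg _)]
    exact ENNReal.ofReal_le_ofReal (by simpa using hvar)
  · rw [memLp_two_iff_lintegral_ofReal_sq_ne_top hφ, not_not] at h
    simp [h]

end Moments

lemma ofReal_sq_add_add_le (a b c : ℝ) :
    ENNReal.ofReal ((a + b + c) ^ 2) ≤
      3 * ENNReal.ofReal (a ^ 2) + 3 * ENNReal.ofReal (b ^ 2) + 3 * ENNReal.ofReal (c ^ 2) := by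
  calc ENNReal.ofReal ((a + b + c) ^ 2)
      ≤ ENNReal.ofReal (3 * a ^ 2 + 3 * b ^ 2 + 3 * c ^ 2) :=
        ENNReal.ofReal_le_ofReal
          (by nlinarith [sq_nonneg (a - b), sq_nonneg (b - c), sq_nonneg (a - c)])
    _ = _ := by
        rw [ENNReal.ofReal_add (by positivity) (by positivity),
          ENNReal.ofReal_add (by positivity) (by positivity)]
        simp [ENNReal.ofReal_mul]

lemma ofReal_sq_inv_mul_sub_le {N : ℕ} (hN : N ≠ 0) (u v : ℝ) :
    ENNReal.ofReal (((N : ℝ)⁻¹ * (u - v)) ^ 2) ≤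
      (N : ℝ≥0∞)⁻¹ * (2 * ENNReal.ofReal (u ^ 2) + 2 * ENNReal.ofReal (v ^ 2)) := by
  have hN₁ : (1 : ℝ) ≤ N := Nat.one_le_cast.2 (Nat.one_le_iff_ne_zero.2 hN)
  have hinv : (N : ℝ)⁻¹ ^ 2 ≤ (N : ℝ)⁻¹ := by
    rw [sq]; exact mul_le_of_le_one_left (by positivity) (inv_le_one_of_one_le₀ hN₁)
  calc ENNReal.ofReal (((N : ℝ)⁻¹ * (u - v)) ^ 2)
      ≤ ENNReal.ofReal ((N : ℝ)⁻¹ * (2 * u ^ 2 + 2 * v ^ 2)) := by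
        refine ENNReal.ofReal_le_ofReal ?_
        rw [mul_pow]
        exact mul_le_mul hinv (by nlinarith [sq_nonneg (u + v)]) (sq_nonneg _) (by positivity)
    _ = _ := by
        rw [ENNReal.ofReal_mul (by positivity), ENNReal.ofReal_inv_of_pos (by positivity),
          ENNReal.ofReal_natCast, ENNReal.ofReal_add (by positivity) (by positivity),
          ENNReal.ofReal_mul zero_le_two, ENNReal.ofReal_mul zero_le_two, ENNReal.ofReal_ofNat]

lemma integral_sq_sum_of_orthogonal {Ω ι : Type*} [MeasurableSpace Ω] {P : Measure Ω}
    {s : Finset ι} {X : ι → Ω → ℝ} (hX : ∀ j ∈ s, MemLp (X j) 2 P)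
    (horth : ∀ j ∈ s, ∀ k ∈ s, j ≠ k → ∫ ω, X j ω * X k ω ∂P = 0) :
    ∫ ω, (∑ j ∈ s, X j ω) ^ 2 ∂P = ∑ j ∈ s, ∫ ω, X j ω ^ 2 ∂P := by
  have hint : ∀ j ∈ s, ∀ k ∈ s, Integrable (fun ω => X j ω * X k ω) P :=
    fun j hj k hk => (hX j hj).integrable_mul (hX k hk)
  simp_rw [sq, Finset.sum_mul_sum]
  rw [integral_finsetSum _ fun j hj => integrable_finsetSum _ fun k hk => hint j hj k hk]
  refine Finset.sum_congr rfl fun j hj => ?_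
  rw [integral_finsetSum _ fun k hk => hint j hj k hk]
  exact Finset.sum_eq_single_of_mem j hj fun k hk hkj => horth j hj k hk hkj.symm

lemma MeasureTheory.MeasurePreserving.integral_comp₀ {Ω α : Type*} [MeasurableSpace Ω]
    [MeasurableSpace α] {P : Measure Ω} {μ : Measure α} {f : Ω → α}
    (hf : MeasurePreserving f P μ) {g : α → ℝ} (hg : AEStronglyMeasurable g μ) :
    ∫ ω, g (f ω) ∂P = ∫ x, g x ∂μ := by
  rw [← hf.map_eq] at hg ⊢
  exact (integral_map hf.aemeasurable hg).symm

section FiberProduct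

variable {α β : Type*} [MeasurableSpace α] [MeasurableSpace β] {μ : Measure α} {ν : Measure β}
  [SFinite μ] [IsProbabilityMeasure ν] {F : α → β → ℝ}

lemma integrable_fiber_mul_of_memLp (hF : MemLp (Function.uncurry F) 2 (μ.prod ν)) :
    Integrable (fun q : α × β × β => F q.1 q.2.1 * F q.1 q.2.2) (μ.prod (ν.prod ν)) :=
  (hF.comp_measurePreserving ((MeasurePreserving.id μ).prod measurePreserving_fst)).integrable_mul
    (hF.comp_measurePreserving ((MeasurePreserving.id μ).prod measurePreserving_snd))

lemma integral_fiber_mul_eq_zero (hF : MemLp (Function.uncurry F) 2 (μ.prod ν))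
    (hc : ∀ᵐ x ∂μ, ∫ y, F x y ∂ν = 0) :
    ∫ q, F q.1 q.2.1 * F q.1 q.2.2 ∂(μ.prod (ν.prod ν)) = 0 := by
  rw [integral_prod _ (integrable_fiber_mul_of_memLp hF)]
  refine integral_eq_zero_of_ae ?_
  filter_upwards [hc] with x hx
  rw [Pi.zero_apply, integral_prod_mul (F x) (F x), hx, zero_mul]

end FiberProduct

section Independence

variable {Ω α ι : Type*} [MeasurableSpace Ω] [MeasurableSpace α] {P : Measure Ω}
  [IsProbabilityMeasure P] {μ : Measure α} {ξ : ι → Ω → α}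

lemma measurePreserving_prodMk_of_iIndepFun (hξ : ∀ j, MeasurePreserving (ξ j) P μ)
    (hind : iIndepFun ξ P) {j k : ι} (hjk : j ≠ k) :
    MeasurePreserving (fun ω => (ξ j ω, ξ k ω)) P (μ.prod μ) := by
  refine ⟨(hξ j).measurable.prodMk (hξ k).measurable, ?_⟩
  rw [(indepFun_iff_map_prod_eq_prod_map_map (hξ j).aemeasurable (hξ k).aemeasurable).mp
    (hind.indepFun hjk), (hξ j).map_eq, (hξ k).map_eq]

lemma measurePreserving_prodMk_prodMk_of_iIndepFun (hξ : ∀ j, MeasurePreserving (ξ j) P μ)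
    (hind : iIndepFun ξ P) {i j k : ι} (hij : i ≠ j) (hik : i ≠ k) (hjk : j ≠ k) :
    MeasurePreserving (fun ω => (ξ i ω, ξ j ω, ξ k ω)) P (μ.prod (μ.prod μ)) := by
  have hjk_i : IndepFun (fun ω => (ξ j ω, ξ k ω)) (ξ i) P :=
    hind.indepFun_prodMk (fun j => (hξ j).measurable) j k i hij.symm hik.symm
  have hpair := measurePreserving_prodMk_of_iIndepFun hξ hind hjk
  refine ⟨(hξ i).measurable.prodMk hpair.measurable, ?_⟩
  rw [(indepFun_iff_map_prod_eq_prod_map_map (hξ i).aemeasurable hpair.aemeasurable).mp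
    hjk_i.symm, (hξ i).map_eq, hpair.map_eq]

lemma integral_sq_sum_comp_eq_card_mul [IsProbabilityMeasure μ]
    (hξ : ∀ j, MeasurePreserving (ξ j) P μ) (hind : iIndepFun ξ P) {F : α → α → ℝ}
    (hF : MemLp (Function.uncurry F) 2 (μ.prod μ)) (hc : ∀ᵐ x ∂μ, ∫ y, F x y ∂μ = 0)
    {i : ι} {s : Finset ι} (hi : i ∉ s) :
    ∫ ω, (∑ j ∈ s, F (ξ i ω) (ξ j ω)) ^ 2 ∂P = s.card * ∫ p, F p.1 p.2 ^ 2 ∂(μ.prod μ) := by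
  have hne : ∀ j ∈ s, i ≠ j := fun j hj => (ne_of_mem_of_not_mem hj hi).symm
  have hpair : ∀ j ∈ s, MeasurePreserving (fun ω => (ξ i ω, ξ j ω)) P (μ.prod μ) :=
    fun j hj => measurePreserving_prodMk_of_iIndepFun hξ hind (hne j hj)
  rw [integral_sq_sum_of_orthogonal (X := fun j ω => F (ξ i ω) (ξ j ω))
    (fun j hj => hF.comp_measurePreserving (hpair j hj))
    fun j hj k hk hjk => ?_]
  · rw [Finset.sum_congr rfl fun j hj =>
      (hpair j hj).integral_comp₀ (g := fun p => F p.1 p.2 ^ 2) (hF.1.pow 2),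
      Finset.sum_const, nsmul_eq_mul]
  · rw [(measurePreserving_prodMk_prodMk_of_iIndepFun hξ hind (hne j hj) (hne k hk)
      hjk).integral_comp₀ (integrable_fiber_mul_of_memLp hF).1]
    exact integral_fiber_mul_eq_zero hF hc

lemma lintegral_sq_sum_sub_integral_le [IsProbabilityMeasure μ]
    (hξ : ∀ j, MeasurePreserving (ξ j) P μ) (hind : iIndepFun ξ P) {f : α → α → ℝ}
    (hf : Measurable (Function.uncurry f)) {i : ι} {s : Finset ι} (hi : i ∉ s) :
    ∫⁻ ω, ENNReal.ofReal ((∑ j ∈ s, (f (ξ i ω) (ξ j ω) - ∫ y, f (ξ i ω) y ∂μ)) ^ 2) ∂P ≤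
      s.card * ∫⁻ x, ∫⁻ y, ENNReal.ofReal (f x y ^ 2) ∂μ ∂μ := by
  set F : α → α → ℝ := fun x y => f x y - ∫ z, f x z ∂μ
  have hFm : Measurable (Function.uncurry F) :=
    hf.sub (hf.stronglyMeasurable.integral_prod_right'.measurable.comp measurable_fst)
  have hFf : ∫⁻ p, ENNReal.ofReal (Function.uncurry F p ^ 2) ∂(μ.prod μ) ≤
      ∫⁻ x, ∫⁻ y, ENNReal.ofReal (f x y ^ 2) ∂μ ∂μ := by
    rw [lintegral_prod _ (hFm.pow_const 2).ennreal_ofReal.aemeasurable]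
    exact lintegral_mono fun x =>
      lintegral_ofReal_sq_sub_integral_le hf.of_uncurry_left.aestronglyMeasurable
  rcases s.eq_empty_or_nonempty with rfl | hs
  · simp
  rcases eq_or_ne (∫⁻ x, ∫⁻ y, ENNReal.ofReal (f x y ^ 2) ∂μ ∂μ) ∞ with hA | hA
  · simp [hA, ENNReal.mul_top, hs.ne_empty]
  have hfL2 : MemLp (Function.uncurry f) 2 (μ.prod μ) := by
    rw [memLp_two_iff_lintegral_ofReal_sq_ne_top hf.aestronglyMeasurable,
      lintegral_prod _ (hf.pow_const 2).ennreal_ofReal.aemeasurable]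
    exact hA
  have hFL2 : MemLp (Function.uncurry F) 2 (μ.prod μ) :=
    (memLp_two_iff_lintegral_ofReal_sq_ne_top hFm.aestronglyMeasurable).2
      (ne_top_of_le_ne_top hA hFf)
  have hFc : ∀ᵐ x ∂μ, ∫ y, F x y ∂μ = 0 := by
    filter_upwards [(hfL2.integrable one_le_two).prod_right_ae] with x hx
    change ∫ y, (f x y - ∫ z, f x z ∂μ) ∂μ = 0
    rw [integral_sub (f := f x) hx (integrable_const _)]
    simp
  have hSL2 : MemLp (fun ω => ∑ j ∈ s, F (ξ i ω) (ξ j ω)) 2 P := memLp_finsetSum s fun j hj =>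
    hFL2.comp_measurePreserving
      (measurePreserving_prodMk_of_iIndepFun hξ hind (ne_of_mem_of_not_mem hj hi).symm)
  calc ∫⁻ ω, ENNReal.ofReal ((∑ j ∈ s, F (ξ i ω) (ξ j ω)) ^ 2) ∂P
      = ENNReal.ofReal (∫ ω, (∑ j ∈ s, F (ξ i ω) (ξ j ω)) ^ 2 ∂P) :=
        (ofReal_integral_eq_lintegral_ofReal hSL2.integrable_sq
          (ae_of_all _ fun _ => sq_nonneg _)).symm
    _ = s.card * ∫⁻ p, ENNReal.ofReal (Function.uncurry F p ^ 2) ∂(μ.prod μ) := by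
        rw [integral_sq_sum_comp_eq_card_mul hξ hind hFL2 hFc hi,
          ENNReal.ofReal_mul (Nat.cast_nonneg _), ENNReal.ofReal_natCast]
        exact congrArg _ (ofReal_integral_eq_lintegral_ofReal hFL2.integrable_sq
          (ae_of_all _ fun _ => sq_nonneg _))
    _ ≤ _ := by gcongr

end Independence

def empiricalMeasure {α : Type*} [MeasurableSpace α] {N : ℕ} (x : Fin N → α) : Measure α :=
  (N : ℝ≥0∞)⁻¹ • ∑ j, Measure.dirac (x j)

lemma integral_empiricalMeasure {α : Type*} [MeasurableSpace α] {N : ℕ} {φ : α → ℝ}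
    (hφ : Measurable φ) (x : Fin N → α) :
    ∫ y, φ y ∂(empiricalMeasure x) = (N : ℝ)⁻¹ * ∑ j, φ (x j) := by
  rw [empiricalMeasure, integral_smul_measure, integral_finsetSum_measure fun j _ =>
    integrable_dirac' hφ.stronglyMeasurable enorm_lt_top]
  simp [integral_dirac' _ _ hφ.stronglyMeasurable]

lemma inv_mul_sum_sub_eq {N : ℕ} (i : Fin N) (a : Fin N → ℝ) (b c : ℝ) :
    (N : ℝ)⁻¹ * ∑ j, a j - c =
      (b - c) + (N : ℝ)⁻¹ * ∑ j ∈ Finset.univ.erase i, (a j - b) + (N : ℝ)⁻¹ * (a i - b) := by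
  have hN : (N : ℝ) ≠ 0 := Nat.cast_ne_zero.2 i.pos.ne'
  rw [← Finset.add_sum_erase _ _ (Finset.mem_univ i), Finset.sum_sub_distrib, Finset.sum_const,
    Finset.card_erase_of_mem (Finset.mem_univ i), Finset.card_univ, Fintype.card_fin,
    nsmul_eq_mul, Nat.cast_sub i.pos]
  field_simp
  ring

section Empirical

variable {Ω α : Type*} [MeasurableSpace Ω] [MeasurableSpace α] {P : Measure Ω}
  {μ : Measure α} [IsProbabilityMeasure μ] {N : ℕ} {f : α → α → ℝ}

lemma lintegral_sq_inv_mul_sum_erase_sub_le [IsProbabilityMeasure P] {ξ : Fin N → Ω → α}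
    (hξ : ∀ j, MeasurePreserving (ξ j) P μ) (hind : iIndepFun ξ P)
    (hf : Measurable (Function.uncurry f)) (i : Fin N) :
    ∫⁻ ω, ENNReal.ofReal (((N : ℝ)⁻¹ *
        ∑ j ∈ Finset.univ.erase i, (f (ξ i ω) (ξ j ω) - ∫ y, f (ξ i ω) y ∂μ)) ^ 2) ∂P ≤
      (N : ℝ≥0∞)⁻¹ * ∫⁻ x, ∫⁻ y, ENNReal.ofReal (f x y ^ 2) ∂μ ∂μ := by
  set A := ∫⁻ x, ∫⁻ y, ENNReal.ofReal (f x y ^ 2) ∂μ ∂μ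
  have hN : N ≠ 0 := i.pos.ne'
  have hcard : ((Finset.univ.erase i).card : ℝ≥0∞) ≤ N := by
    exact_mod_cast (Finset.card_le_univ _).trans_eq (Fintype.card_fin N)
  calc _ = ∫⁻ ω, (N : ℝ≥0∞)⁻¹ ^ 2 * ENNReal.ofReal
          ((∑ j ∈ Finset.univ.erase i, (f (ξ i ω) (ξ j ω) - ∫ y, f (ξ i ω) y ∂μ)) ^ 2) ∂P := by
        refine lintegral_congr fun ω => ?_
        rw [mul_pow, ENNReal.ofReal_mul (by positivity), ENNReal.ofReal_pow (by positivity),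
          ENNReal.ofReal_inv_of_pos (by positivity), ENNReal.ofReal_natCast]
    _ ≤ (N : ℝ≥0∞)⁻¹ ^ 2 * ((Finset.univ.erase i).card * A) := by
        rw [lintegral_const_mul' _ _ (by simp [hN])]
        gcongr
        exact lintegral_sq_sum_sub_integral_le hξ hind hf (Finset.notMem_erase i _)
    _ ≤ (N : ℝ≥0∞)⁻¹ ^ 2 * (N * A) := by gcongr
    _ = (N : ℝ≥0∞)⁻¹ * A := by
        rw [sq, mul_assoc, ← mul_assoc _ (N : ℝ≥0∞),
          ENNReal.inv_mul_cancel (by simpa using hN) (ENNReal.natCast_ne_top N), one_mul]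

lemma lintegral_sq_inv_mul_diag_sub_le {X : Ω → α} (hX : MeasurePreserving X P μ)
    (hf : Measurable (Function.uncurry f)) (hN : N ≠ 0) :
    ∫⁻ ω, ENNReal.ofReal (((N : ℝ)⁻¹ * (f (X ω) (X ω) - ∫ y, f (X ω) y ∂μ)) ^ 2) ∂P ≤
      (N : ℝ≥0∞)⁻¹ * (2 * ∫⁻ x, ENNReal.ofReal (f x x ^ 2) ∂μ +
        2 * ∫⁻ x, ∫⁻ y, ENNReal.ofReal (f x y ^ 2) ∂μ ∂μ) := by
  set g : α → ℝ := fun x => ∫ y, f x y ∂μ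
  have hg : Measurable g := hf.stronglyMeasurable.integral_prod_right'.measurable
  have hXm := hX.measurable
  have hgf : ∫⁻ x, ENNReal.ofReal (g x ^ 2) ∂μ ≤
      ∫⁻ x, ∫⁻ y, ENNReal.ofReal (f x y ^ 2) ∂μ ∂μ := lintegral_mono fun x =>
    ofReal_sq_integral_le_lintegral hf.of_uncurry_left.aestronglyMeasurable
  calc _ ≤ ∫⁻ ω, (N : ℝ≥0∞)⁻¹ * (2 * ENNReal.ofReal (f (X ω) (X ω) ^ 2) +
          2 * ENNReal.ofReal (g (X ω) ^ 2)) ∂P :=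
        lintegral_mono fun ω => ofReal_sq_inv_mul_sub_le hN _ _
    _ = (N : ℝ≥0∞)⁻¹ * (2 * ∫⁻ x, ENNReal.ofReal (f x x ^ 2) ∂μ +
          2 * ∫⁻ x, ENNReal.ofReal (g x ^ 2) ∂μ) := by
        rw [lintegral_const_mul _ (by fun_prop),
          lintegral_add_left (by fun_prop), lintegral_const_mul _ (by fun_prop),
          lintegral_const_mul _ (by fun_prop),
          hX.lintegral_comp (f := fun x => ENNReal.ofReal (f x x ^ 2)) (by fun_prop),
          hX.lintegral_comp (f := fun x => ENNReal.ofReal (g x ^ 2)) (by fun_prop)]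
    _ ≤ _ := by gcongr

lemma lintegral_sq_integral_empiricalMeasure_sub_le [IsProbabilityMeasure P]
    {ξ : Fin N → Ω → α} (hξ : ∀ j, MeasurePreserving (ξ j) P μ) (hind : iIndepFun ξ P)
    (hf : Measurable (Function.uncurry f)) {h : α → ℝ} (hh : Measurable h) (i : Fin N) :
    ∫⁻ ω, ENNReal.ofReal
        (((∫ y, f (ξ i ω) y ∂(empiricalMeasure fun j => ξ j ω)) - h (ξ i ω)) ^ 2) ∂P ≤
      3 * ∫⁻ x, ENNReal.ofReal (((∫ y, f x y ∂μ) - h x) ^ 2) ∂μ +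
        9 * ((N : ℝ≥0∞)⁻¹ * ∫⁻ x, ∫⁻ y, ENNReal.ofReal (f x y ^ 2) ∂μ ∂μ) +
        6 * ((N : ℝ≥0∞)⁻¹ * ∫⁻ x, ENNReal.ofReal (f x x ^ 2) ∂μ) := by
  set g : α → ℝ := fun x => ∫ y, f x y ∂μ
  have hg : Measurable g := hf.stronglyMeasurable.integral_prod_right'.measurable
  have hξm : ∀ j, Measurable (ξ j) := fun j => (hξ j).measurable
  set T₁ : Ω → ℝ := fun ω => g (ξ i ω) - h (ξ i ω)
  set T₂ : Ω → ℝ := fun ω =>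
    (N : ℝ)⁻¹ * ∑ j ∈ Finset.univ.erase i, (f (ξ i ω) (ξ j ω) - g (ξ i ω))
  set T₃ : Ω → ℝ := fun ω => (N : ℝ)⁻¹ * (f (ξ i ω) (ξ i ω) - g (ξ i ω))
  have hT₁ : ∫⁻ ω, ENNReal.ofReal (T₁ ω ^ 2) ∂P = ∫⁻ x, ENNReal.ofReal ((g x - h x) ^ 2) ∂μ :=
    (hξ i).lintegral_comp ((hg.sub hh).pow_const 2).ennreal_ofReal
  calc _ = ∫⁻ ω, ENNReal.ofReal ((T₁ ω + T₂ ω + T₃ ω) ^ 2) ∂P := by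
        refine lintegral_congr fun ω => ?_
        rw [integral_empiricalMeasure hf.of_uncurry_left, inv_mul_sum_sub_eq i _ (g (ξ i ω))]
    _ ≤ ∫⁻ ω, (3 * ENNReal.ofReal (T₁ ω ^ 2) + 3 * ENNReal.ofReal (T₂ ω ^ 2) +
          3 * ENNReal.ofReal (T₃ ω ^ 2)) ∂P :=
        lintegral_mono fun ω => ofReal_sq_add_add_le _ _ _
    _ = 3 * ∫⁻ ω, ENNReal.ofReal (T₁ ω ^ 2) ∂P + 3 * ∫⁻ ω, ENNReal.ofReal (T₂ ω ^ 2) ∂P +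
          3 * ∫⁻ ω, ENNReal.ofReal (T₃ ω ^ 2) ∂P := by
        rw [lintegral_add_left (by fun_prop), lintegral_add_left (by fun_prop),
          lintegral_const_mul _ (by fun_prop), lintegral_const_mul _ (by fun_prop),
          lintegral_const_mul _ (by fun_prop)]
    _ ≤ 3 * ∫⁻ x, ENNReal.ofReal ((g x - h x) ^ 2) ∂μ +
          3 * ((N : ℝ≥0∞)⁻¹ * ∫⁻ x, ∫⁻ y, ENNReal.ofReal (f x y ^ 2) ∂μ ∂μ) +
          3 * ((N : ℝ≥0∞)⁻¹ * (2 * ∫⁻ x, ENNReal.ofReal (f x x ^ 2) ∂μ +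
            2 * ∫⁻ x, ∫⁻ y, ENNReal.ofReal (f x y ^ 2) ∂μ ∂μ)) := by
        rw [hT₁]
        gcongr
        · exact lintegral_sq_inv_mul_sum_erase_sub_le hξ hind hf i
        · exact lintegral_sq_inv_mul_diag_sub_le (hξ i) hf i.pos.ne'
    _ = _ := by ring

end Empirical

/-- **Empirical-measure fluctuation estimate (inequality (RR1) and its particular case
(Le19)).** There is a universal constant `C > 0` such that for i.i.d. random variables
`ξ₁,…,ξ_N` with law `μ`, any probability measure `μ̄`, any nonnegative measurable
`f : ℝ^d × ℝ^d → [0,∞)` and any `i`, writing `f(x,η) := ∫ f(x,y) η(dy)`,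
`E|f(ξ_i, μ_{ξ^N}) − f(ξ_i, μ̄)|²` is bounded (in `[0,∞]`) by the four-term expression,
and in particular (taking `μ̄ = μ`) by `(C/N)(∬ f² dμ dμ + ∫ f(x,x)² μ(dx))`. -/
theorem empirical_measure_fluctuation :
    ∃ C : ℝ, 0 < C ∧
      ∀ (d N : ℕ) (Ω : Type u) (_ : MeasurableSpace Ω) (P : Measure Ω),
        IsProbabilityMeasure P →
        ∀ ξ : Fin N → Ω → EuclideanSpace ℝ (Fin d),
          (∀ j, Measurable (ξ j)) →
          iIndepFun ξ P →
          ∀ μ : Measure (EuclideanSpace ℝ (Fin d)), IsProbabilityMeasure μ →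
            (∀ j, P.map (ξ j) = μ) →
            ∀ μbar : Measure (EuclideanSpace ℝ (Fin d)), IsProbabilityMeasure μbar →
              ∀ f : EuclideanSpace ℝ (Fin d) → EuclideanSpace ℝ (Fin d) → ℝ,
                Measurable (Function.uncurry f) →
                (∀ x y, 0 ≤ f x y) →
                ∀ i : Fin N,
                  (∫⁻ ω, ENNReal.ofReal
                      (((∫ y, f (ξ i ω) y
                            ∂((N : ℝ≥0∞)⁻¹ • ∑ j : Fin N, Measure.dirac (ξ j ω))) -
                          ∫ y, f (ξ i ω) y ∂μbar) ^ 2) ∂P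
                    ≤ ENNReal.ofReal C *
                        ((∫⁻ x, ENNReal.ofReal
                            (((∫ y, f x y ∂μ) - ∫ y, f x y ∂μbar) ^ 2) ∂μ) +
                          (N : ℝ≥0∞)⁻¹ *
                            ∫⁻ x, (∫⁻ y, ENNReal.ofReal ((f x y) ^ 2) ∂μ) ∂μ +
                          (N : ℝ≥0∞)⁻¹ *
                            ∫⁻ x, ENNReal.ofReal ((∫ y, f x y ∂μbar) ^ 2) ∂μ +
                          (N : ℝ≥0∞)⁻¹ * ∫⁻ x, ENNReal.ofReal ((f x x) ^ 2) ∂μ)) ∧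
                  (∫⁻ ω, ENNReal.ofReal
                      (((∫ y, f (ξ i ω) y
                            ∂((N : ℝ≥0∞)⁻¹ • ∑ j : Fin N, Measure.dirac (ξ j ω))) -
                          ∫ y, f (ξ i ω) y ∂μ) ^ 2) ∂P
                    ≤ ENNReal.ofReal C * (N : ℝ≥0∞)⁻¹ *
                        ((∫⁻ x, (∫⁻ y, ENNReal.ofReal ((f x y) ^ 2) ∂μ) ∂μ) +
                          ∫⁻ x, ENNReal.ofReal ((f x x) ^ 2) ∂μ)) := by
  refine ⟨9, by norm_num, ?_⟩
  intro d N Ω _ P _ ξ hξm hind μ _ hlaw μbar _ f hf _ i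
  have hξ : ∀ j, MeasurePreserving (ξ j) P μ := fun j => ⟨hξm j, hlaw j⟩
  have key := fun (ν : Measure (EuclideanSpace ℝ (Fin d))) [SFinite ν] =>
    lintegral_sq_integral_empiricalMeasure_sub_le hξ hind hf
      (hf.stronglyMeasurable.integral_prod_right' (ν := ν)).measurable i
  set A := ∫⁻ x, ∫⁻ y, ENNReal.ofReal (f x y ^ 2) ∂μ ∂μ
  set B := ∫⁻ x, ENNReal.ofReal (f x x ^ 2) ∂μ
  rw [ENNReal.ofReal_ofNat]
  constructor
  · set D := ∫⁻ x, ENNReal.ofReal (((∫ y, f x y ∂μ) - ∫ y, f x y ∂μbar) ^ 2) ∂μ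
    set E := ∫⁻ x, ENNReal.ofReal ((∫ y, f x y ∂μbar) ^ 2) ∂μ
    calc _ ≤ 3 * D + 9 * ((N : ℝ≥0∞)⁻¹ * A) + 6 * ((N : ℝ≥0∞)⁻¹ * B) := key μbar
      _ ≤ 9 * D + 9 * ((N : ℝ≥0∞)⁻¹ * A) + 9 * ((N : ℝ≥0∞)⁻¹ * B) := by gcongr <;> norm_num
      _ ≤ 9 * D + 9 * ((N : ℝ≥0∞)⁻¹ * A) + 9 * ((N : ℝ≥0∞)⁻¹ * B) +
            9 * ((N : ℝ≥0∞)⁻¹ * E) := le_self_add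
      _ = 9 * (D + (N : ℝ≥0∞)⁻¹ * A + (N : ℝ≥0∞)⁻¹ * E + (N : ℝ≥0∞)⁻¹ * B) := by ring
  · calc _ ≤ 3 * ∫⁻ x, ENNReal.ofReal (((∫ y, f x y ∂μ) - ∫ y, f x y ∂μ) ^ 2) ∂μ +
            9 * ((N : ℝ≥0∞)⁻¹ * A) + 6 * ((N : ℝ≥0∞)⁻¹ * B) := key μ
      _ ≤ 9 * ((N : ℝ≥0∞)⁻¹ * A) + 9 * ((N : ℝ≥0∞)⁻¹ * B) := by
          simp only [sub_self, ne_eq, OfNat.ofNat_ne_zero, not_false_eq_true, zero_pow,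
            ENNReal.ofReal_zero, lintegral_zero, mul_zero, zero_add]
          gcongr
          norm_num
      _ = 9 * (N : ℝ≥0∞)⁻¹ * (A + B) := by ring
end
end

section
/- Dissipativity of the tamed drift (Lemma 3.9, labeled Le28): Let b : ℝ₊ × ℝ^d → ℝ^d be measurable and suppose for some m ≥ 1, κ₂, κ₃, κ₄ ≥ 0 and κ₅ < 0 that |b(t,x)| ≤ (κ₂(1 + |x|))^m and ⟨x, b(t,x)⟩ ≤ κ₃ + κ₄|x|² + κ₅|x|^{m+1} for all (t,x). Define b_ε(t,x) := ε b(t,x)/(1 + √ε |b(t,x)|^{1−1/m}). Let κ₆ ∈ ℝ satisfy κ₄ + κ₅ < κ₆ if m = 1, and κ₆ < 0 if m > 1. Then there are ε₀ ∈ (0,1) and C₁ > 0 such that for all ε ∈ (0, ε₀) and all (t,x) ∈ [0,∞) × ℝ^d, ε^{−1} [ ⟨x, b_ε(t,x)⟩ + |b_ε(t,x)|² ] ≤ κ₆ |x|² + C₁. -/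
open scoped ENNReal RealInnerProductSpace

noncomputable section

/-- The tamed drift `b_ε(t,x) := ε b(t,x) / (1 + √ε |b(t,x)|^{1−1/m})`. -/
def tameDrift {d : ℕ} (b : ℝ → EuclideanSpace ℝ (Fin d) → EuclideanSpace ℝ (Fin d))
    (m ε : ℝ) (t : ℝ) (x : EuclideanSpace ℝ (Fin d)) : EuclideanSpace ℝ (Fin d) :=
  (ε / (1 + Real.sqrt ε * ‖b t x‖ ^ (1 - 1 / m))) • b t x

open Real Set

/-! With `D = 1 + √ε |b|^{1-1/m}` the left-hand side is `⟨x,b⟩/D + ε|b|²/D²`, and since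
`√ε |b|^{1-1/m} ≤ D` the second term is at most `√ε |b|^{1+1/m}/D ≤ √ε (κ₂(1+|x|))^{m+1}/D`.
For `m = 1` the denominator is the constant `1 + √ε`, and the loss `-κ₅√ε|x|²` is absorbed by the
gap `κ₆ - κ₄ - κ₅` once `ε` is small. For `m > 1` and `|x| ≥ 1`, small `ε` makes the numerator
at most `κ₅|x|^{m+1}/2`, while `D ≲ 1 + √ε|x|^{m-1}`: where `√ε|x|^{m-1} ≤ 1` the term is
`≲ -|x|^{m+1}`, which beats any multiple of `|x|²` up to a constant, and elsewhere it is
`≲ -|x|²/√ε`, which beats `(κ₄ - κ₆)|x|²` for small `ε`. -/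

lemma inv_mul_inner_add_norm_sq_div_smul {E : Type*} [NormedAddCommGroup E]
    [InnerProductSpace ℝ E] (x v : E) {ε D : ℝ} (hε : ε ≠ 0) (hD : D ≠ 0) :
    ε⁻¹ * (⟪x, (ε / D) • v⟫ + ‖(ε / D) • v‖ ^ 2) = ⟪x, v⟫ / D + ε * ‖v‖ ^ 2 / D ^ 2 := by
  rw [real_inner_smul_right, norm_smul, mul_pow, Real.norm_eq_abs, sq_abs]
  field_simp

lemma rpow_le_rpow_of_le_rpow {n K m p r : ℝ} (hn : 0 ≤ n) (hK : 0 ≤ K) (hnK : n ≤ K ^ m)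
    (hp : 0 ≤ p) (hr : m * p = r) : n ^ p ≤ K ^ r := by
  rw [← hr, rpow_mul hK]
  exact rpow_le_rpow hn hnK hp

lemma mul_sq_div_one_add_sqrt_mul_rpow_sq_le {ε n : ℝ} (q : ℝ) (hε : 0 ≤ ε) (hn : 0 ≤ n) :
    ε * n ^ 2 / (1 + √ε * n ^ q) ^ 2 ≤ √ε * n ^ (2 - q) / (1 + √ε * n ^ q) := by
  set D := 1 + √ε * n ^ q
  have hD : 1 ≤ D := le_add_of_nonneg_right (by positivity)
  rcases hn.eq_or_lt with rfl | hn
  · simp only [ne_eq, OfNat.ofNat_ne_zero, not_false_eq_true, zero_pow, mul_zero, zero_div]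
    positivity
  have hsplit : ε * n ^ 2 = (√ε * n ^ q) * (√ε * n ^ (2 - q)) := by
    rw [mul_mul_mul_comm, mul_self_sqrt hε, ← rpow_add hn, add_sub_cancel, rpow_two]
  calc ε * n ^ 2 / D ^ 2 = (√ε * n ^ q / D) * (√ε * n ^ (2 - q) / D) := by rw [hsplit]; field_simp
    _ ≤ 1 * (√ε * n ^ (2 - q) / D) := by
        gcongr
        exact (div_le_one (by positivity)).2 (by linarith)
    _ = √ε * n ^ (2 - q) / D := one_mul _

lemma div_add_mul_sq_div_sq_le {m K R n I ε κ₃ κ₄ κ₅ : ℝ} (hm : 1 ≤ m) (hK : 0 ≤ K)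
    (hn : 0 ≤ n) (hε : 0 ≤ ε) (hκ₃ : 0 ≤ κ₃) (hκ₄ : 0 ≤ κ₄) (hnK : n ≤ K ^ m)
    (hI : I ≤ κ₃ + κ₄ * R ^ 2 + κ₅ * R ^ (m + 1)) :
    I / (1 + √ε * n ^ (1 - 1 / m)) + ε * n ^ 2 / (1 + √ε * n ^ (1 - 1 / m)) ^ 2
      ≤ κ₃ + κ₄ * R ^ 2 + (√ε * K ^ (m + 1) + κ₅ * R ^ (m + 1)) / (1 + √ε * n ^ (1 - 1 / m)) := by
  set D := 1 + √ε * n ^ (1 - 1 / m)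
  have hD : 1 ≤ D := le_add_of_nonneg_right (by positivity)
  have hm₀ : m ≠ 0 := by positivity
  have hnK' : n ^ (2 - (1 - 1 / m)) ≤ K ^ (m + 1) := rpow_le_rpow_of_le_rpow hn hK hnK
    (by linarith [one_div_pos.2 (zero_lt_one.trans_le hm)]) (by field_simp; ring)
  have h₁ : I / D ≤ (κ₃ + κ₄ * R ^ 2 + κ₅ * R ^ (m + 1)) / D := by gcongr
  have h₂ : (κ₃ + κ₄ * R ^ 2) / D ≤ κ₃ + κ₄ * R ^ 2 := div_le_self (by positivity) hD
  have h₃ : √ε * n ^ (2 - (1 - 1 / m)) / D ≤ √ε * K ^ (m + 1) / D := by gcongr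
  have h₄ := mul_sq_div_one_add_sqrt_mul_rpow_sq_le (1 - 1 / m) hε hn
  rw [add_div, add_div] at *
  linarith

lemma exists_mul_sq_sub_mul_sq_mul_rpow_le {A c p : ℝ} (hA : 0 ≤ A) (hc : 0 < c) (hp : 0 < p) :
    ∃ C ≥ 0, ∀ R, 0 ≤ R → A * R ^ 2 - c * R ^ 2 * R ^ p ≤ C := by
  refine ⟨A * ((A / c) ^ p⁻¹) ^ 2, by positivity, fun R hR => ?_⟩
  have hRp : 0 ≤ R ^ p := by positivity
  rcases le_or_gt (A / c) (R ^ p) with h | h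
  · have : A ≤ c * R ^ p := by rwa [div_le_iff₀' hc] at h
    nlinarith [sq_nonneg R]
  · have hR : R ^ 2 ≤ ((A / c) ^ p⁻¹) ^ 2 :=
      pow_le_pow_left₀ hR ((lt_rpow_inv_iff_of_pos hR (by positivity) hp).2 h).le 2
    nlinarith [mul_nonneg (mul_nonneg hc.le (sq_nonneg R)) hRp]

lemma exists_mul_sq_sub_div_le {A c p : ℝ} (hA : 0 ≤ A) (hc : 0 < c) (hp : 0 < p) :
    ∃ C ≥ 0, ∀ R t D, 0 ≤ R → 0 < D → D ≤ 1 + t * R ^ p → 2 * A * t ≤ c →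
      A * R ^ 2 - c * R ^ 2 * R ^ p / D ≤ C := by
  obtain ⟨C, hC, hbound⟩ := exists_mul_sq_sub_mul_sq_mul_rpow_le hA (half_pos hc) hp
  refine ⟨C, hC, fun R t D hR hD hDt hAt => ?_⟩
  have hRp : 0 ≤ R ^ p := by positivity
  have hcRR : 0 ≤ c * R ^ 2 * R ^ p := by positivity
  rcases le_or_gt (t * R ^ p) 1 with ht | ht
  · have : c / 2 * R ^ 2 * R ^ p ≤ c * R ^ 2 * R ^ p / D := by
      rw [le_div_iff₀ hD]
      nlinarith
    linarith [hbound R hR]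
  · have : A * R ^ 2 ≤ c * R ^ 2 * R ^ p / D := by
      rw [le_div_iff₀ hD]
      have : 0 ≤ A * R ^ 2 := by positivity
      nlinarith [mul_le_mul_of_nonneg_left (show D ≤ 2 * (t * R ^ p) by linarith) this,
        mul_le_mul_of_nonneg_right hAt (mul_nonneg (sq_nonneg R) hRp)]
    linarith

lemma rpow_mul_one_add_le {κ R r : ℝ} (hκ : 0 ≤ κ) (hR : 0 ≤ R) (hr : 0 ≤ r) :
    (κ * (1 + R)) ^ r ≤ (2 * κ) ^ r * max 1 R ^ r := by
  rw [← mul_rpow (by positivity) (by positivity)]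
  refine rpow_le_rpow (by positivity) ?_ hr
  nlinarith [le_max_left 1 R, le_max_right 1 R]

lemma exists_tame_bound_of_eq_one {κ₂ κ₄ κ₅ κ₆ : ℝ} (hκ₅ : κ₅ ≤ 0) (hκ₆ : κ₄ + κ₅ < κ₆) :
    ∃ s₀ ∈ Ioo (0 : ℝ) 1, ∃ C > 0, ∀ s ∈ Ioo 0 s₀, ∀ R D, 1 ≤ D → D ≤ 1 + s →
      κ₄ * R ^ 2 + (s * (κ₂ * (1 + R)) ^ 2 + κ₅ * R ^ 2) / D ≤ κ₆ * R ^ 2 + C := by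
  have hL : 0 < -κ₅ + 2 * κ₂ ^ 2 + 1 := by nlinarith [sq_nonneg κ₂]
  refine ⟨min (1 / 2) ((κ₆ - (κ₄ + κ₅)) / (-κ₅ + 2 * κ₂ ^ 2 + 1)),
    ⟨lt_min (by norm_num) (div_pos (by linarith) hL), (min_le_left _ _).trans_lt (by norm_num)⟩,
    2 * κ₂ ^ 2 + 1, by positivity, ?_⟩
  rintro s ⟨hs, hs₀⟩ R D hD₁ hD₂
  have hs₁ : s < 1 := hs₀.trans_le (min_le_left _ _) |>.trans (by norm_num)
  have hsL : s * (-κ₅ + 2 * κ₂ ^ 2 + 1) ≤ κ₆ - (κ₄ + κ₅) :=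
    (le_div_iff₀ hL).1 (hs₀.le.trans (min_le_right _ _))
  have hD : 0 < D := by linarith
  have h₁ : κ₅ * R ^ 2 / D ≤ κ₅ * (1 - s) * R ^ 2 := by
    have : (1 - s) * D ≤ 1 := by nlinarith
    rw [div_le_iff₀ hD]
    nlinarith [mul_le_mul_of_nonneg_left this (mul_nonneg (neg_nonneg.2 hκ₅) (sq_nonneg R))]
  have h₂ : s * (κ₂ * (1 + R)) ^ 2 / D ≤ s * (κ₂ * (1 + R)) ^ 2 := div_le_self (by positivity) hD₁
  have h₃ : (κ₂ * (1 + R)) ^ 2 ≤ 2 * κ₂ ^ 2 * (1 + R ^ 2) := by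
    nlinarith [mul_nonneg (sq_nonneg κ₂) (sq_nonneg (1 - R))]
  rw [add_div]
  nlinarith [mul_le_mul_of_nonneg_left h₃ hs.le, mul_nonneg (sq_nonneg κ₂) (sub_nonneg.2 hs₁.le),
    mul_nonneg (sub_nonneg.2 hsL) (sq_nonneg R),
    mul_nonneg (mul_nonneg hs.le (sq_nonneg κ₂)) (sq_nonneg R)]
lemma mul_sq_add_div_le_of_le_one {m κ₂ A κ₅ s R D : ℝ} (hκ₂ : 0 ≤ κ₂) (hA : 0 ≤ A)
    (hκ₅ : κ₅ ≤ 0) (hs : 0 ≤ s) (hs₁ : s ≤ 1) (hR : 0 ≤ R) (hR₁ : R ≤ 1) (hD : 1 ≤ D)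
    (hm : 0 ≤ m + 1) :
    A * R ^ 2 + (s * (κ₂ * (1 + R)) ^ (m + 1) + κ₅ * R ^ (m + 1)) / D
      ≤ A + (2 * κ₂) ^ (m + 1) := by
  have hK := rpow_mul_one_add_le hκ₂ hR hm
  rw [max_eq_left hR₁, one_rpow, mul_one] at hK
  have h₁ : (s * (κ₂ * (1 + R)) ^ (m + 1) + κ₅ * R ^ (m + 1)) / D ≤ (2 * κ₂) ^ (m + 1) :=
    calc _ ≤ s * (κ₂ * (1 + R)) ^ (m + 1) / D := by
            gcongr
            nlinarith [rpow_nonneg hR (m + 1)]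
      _ ≤ s * (κ₂ * (1 + R)) ^ (m + 1) := div_le_self (by positivity) hD
      _ ≤ 1 * (2 * κ₂) ^ (m + 1) := by gcongr
      _ = (2 * κ₂) ^ (m + 1) := one_mul _
  nlinarith [mul_le_mul_of_nonneg_left (pow_le_one₀ hR hR₁ : R ^ 2 ≤ 1) hA]

lemma exists_tame_bound_of_one_lt {m κ₂ κ₄ κ₅ κ₆ : ℝ} (hm : 1 < m) (hκ₂ : 0 ≤ κ₂) (hκ₅ : κ₅ < 0) :
    ∃ s₀ ∈ Ioo (0 : ℝ) 1, ∃ C > 0, ∀ s ∈ Ioo 0 s₀, ∀ R, 0 ≤ R → ∀ D, 1 ≤ D →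
      D ≤ 1 + s * (κ₂ * (1 + R)) ^ (m - 1) →
      κ₄ * R ^ 2 + (s * (κ₂ * (1 + R)) ^ (m + 1) + κ₅ * R ^ (m + 1)) / D ≤ κ₆ * R ^ 2 + C := by
  set A := max (κ₄ - κ₆) 0
  set M := (2 * κ₂) ^ (m + 1)
  set P := (2 * κ₂) ^ (m - 1)
  have hA : 0 ≤ A := le_max_right _ _
  have hM : 0 ≤ M := by positivity
  have hP : 0 ≤ P := by positivity
  have hAP : 0 < 4 * (A + 1) * (P + 1) := by positivity
  obtain ⟨C₀, hC₀, hcore⟩ :=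
    exists_mul_sq_sub_div_le hA (half_pos (neg_pos.2 hκ₅)) (sub_pos.2 hm)
  refine ⟨min (1 / 2) (min (-κ₅ / (2 * (M + 1))) (-κ₅ / (4 * (A + 1) * (P + 1)))),
    ⟨lt_min (by norm_num) (lt_min (by apply div_pos <;> linarith) (div_pos (by linarith) hAP)),
      (min_le_left _ _).trans_lt (by norm_num)⟩, A + M + C₀ + 1, by positivity, ?_⟩
  rintro s ⟨hs, hs₀⟩ R hR D hD₁ hD₂
  have hs₁ : s ≤ 1 := (hs₀.le.trans (min_le_left _ _)).trans (by norm_num)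
  have hsM : s * M ≤ -κ₅ / 2 := by
    have := (le_div_iff₀ (by positivity)).1
      (hs₀.le.trans ((min_le_right _ _).trans (min_le_left _ _)))
    nlinarith
  have hsP : 2 * A * (s * P) ≤ -κ₅ / 2 := by
    have := (le_div_iff₀ hAP).1 (hs₀.le.trans ((min_le_right _ _).trans (min_le_right _ _)))
    nlinarith [mul_nonneg hA hP, mul_nonneg hs.le (mul_nonneg hA hP)]
  have hD : 0 < D := by linarith
  have hAR : κ₄ * R ^ 2 ≤ κ₆ * R ^ 2 + A * R ^ 2 := by
    nlinarith [le_max_left (κ₄ - κ₆) 0, sq_nonneg R]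
  rcases le_total R 1 with hR1 | hR1
  · have := mul_sq_add_div_le_of_le_one (m := m) hκ₂ hA hκ₅.le hs.le hs₁ hR hR1 hD₁ (by linarith)
    linarith
  · have hKsucc := rpow_mul_one_add_le hκ₂ hR (r := m + 1) (by linarith)
    have hKpred := rpow_mul_one_add_le hκ₂ hR (r := m - 1) (by linarith)
    rw [max_eq_right hR1] at hKsucc hKpred
    have hsplit : R ^ (m + 1) = R ^ 2 * R ^ (m - 1) := by
      rw [← rpow_natCast, ← rpow_add (by linarith)]
      congr 1
      push_cast
      ring
    have h₁ : (s * (κ₂ * (1 + R)) ^ (m + 1) + κ₅ * R ^ (m + 1)) / D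
        ≤ -(-κ₅ / 2) * R ^ 2 * R ^ (m - 1) / D := by
      gcongr
      nlinarith [rpow_nonneg hR (m + 1), mul_le_mul_of_nonneg_left hKsucc hs.le]
    have h₂ : D ≤ 1 + s * P * R ^ (m - 1) := by
      nlinarith [mul_le_mul_of_nonneg_left hKpred hs.le]
    have := hcore R (s * P) D hR hD h₂ hsP
    rw [neg_mul, neg_mul, neg_div] at h₁
    linarith

lemma exists_tame_bound {m κ₂ κ₄ κ₅ κ₆ : ℝ} (hm : 1 ≤ m) (hκ₂ : 0 ≤ κ₂) (hκ₅ : κ₅ < 0)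
    (hκ₆ : m = 1 → κ₄ + κ₅ < κ₆) :
    ∃ s₀ ∈ Ioo (0 : ℝ) 1, ∃ C > 0, ∀ s ∈ Ioo 0 s₀, ∀ R, 0 ≤ R → ∀ D, 1 ≤ D →
      D ≤ 1 + s * (κ₂ * (1 + R)) ^ (m - 1) →
      κ₄ * R ^ 2 + (s * (κ₂ * (1 + R)) ^ (m + 1) + κ₅ * R ^ (m + 1)) / D ≤ κ₆ * R ^ 2 + C := by
  rcases hm.eq_or_lt with rfl | hm
  · obtain ⟨s₀, hs₀, C, hC, hbound⟩ := exists_tame_bound_of_eq_one hκ₅.le (hκ₆ rfl)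
    refine ⟨s₀, hs₀, C, hC, fun s hs R _ D hD₁ hD₂ => ?_⟩
    norm_num at hD₂ ⊢
    exact hbound s hs R D hD₁ hD₂
  · exact exists_tame_bound_of_one_lt hm hκ₂ hκ₅

theorem tamed_drift_dissipativity_general
    {d : ℕ} (b : ℝ → EuclideanSpace ℝ (Fin d) → EuclideanSpace ℝ (Fin d))
    (m κ₂ κ₃ κ₄ κ₅ κ₆ : ℝ)
    (hm : 1 ≤ m) (hκ₂ : 0 ≤ κ₂) (hκ₃ : 0 ≤ κ₃) (hκ₄ : 0 ≤ κ₄) (hκ₅ : κ₅ < 0)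
    (hb_growth : ∀ t x, 0 ≤ t → ‖b t x‖ ≤ (κ₂ * (1 + ‖x‖)) ^ m)
    (hb_diss : ∀ t x, 0 ≤ t → ⟪x, b t x⟫ ≤ κ₃ + κ₄ * ‖x‖ ^ 2 + κ₅ * ‖x‖ ^ (m + 1))
    (hκ₆₁ : m = 1 → κ₄ + κ₅ < κ₆) :
    ∃ ε₀ ∈ Set.Ioo (0:ℝ) 1, ∃ C₁ > 0, ∀ ε ∈ Set.Ioo (0:ℝ) ε₀, ∀ t x, 0 ≤ t →
      ε⁻¹ * (⟪x, tameDrift b m ε t x⟫ + ‖tameDrift b m ε t x‖ ^ 2)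
        ≤ κ₆ * ‖x‖ ^ 2 + C₁ := by
  obtain ⟨s₀, ⟨hs₀, hs₀₁⟩, C, hC, hbound⟩ := exists_tame_bound hm hκ₂ hκ₅ hκ₆₁
  refine ⟨s₀ ^ 2, ⟨by positivity, by nlinarith⟩, κ₃ + C, by positivity, ?_⟩
  rintro ε ⟨hε, hεs₀⟩ t x ht
  have hK : 0 ≤ κ₂ * (1 + ‖x‖) := by positivity
  have hnK := hb_growth t x ht
  set D := 1 + √ε * ‖b t x‖ ^ (1 - 1 / m)
  have hD : 1 ≤ D := le_add_of_nonneg_right (by positivity)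
  have hDK : D ≤ 1 + √ε * (κ₂ * (1 + ‖x‖)) ^ (m - 1) := by
    have hm₀ : m ≠ 0 := by positivity
    have : ‖b t x‖ ^ (1 - 1 / m) ≤ (κ₂ * (1 + ‖x‖)) ^ (m - 1) := rpow_le_rpow_of_le_rpow
      (norm_nonneg _) hK hnK (sub_nonneg.2 (div_le_one_of_le₀ hm (by linarith))) (by field_simp)
    unfold D
    gcongr
  rw [tameDrift, inv_mul_inner_add_norm_sq_div_smul _ _ hε.ne' (by positivity)]
  have := div_add_mul_sq_div_sq_le hm hK (norm_nonneg _) hε.le hκ₃ hκ₄ hnK (hb_diss t x ht)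
  have := hbound √ε ⟨sqrt_pos.2 hε, (sqrt_lt' hs₀).2 hεs₀⟩ ‖x‖ (norm_nonneg x) D hD hDK
  linarith

/-- **Lemma 3.9 (Le28): dissipativity of the tamed drift.** If
`|b(t,x)| ≤ (κ₂(1+|x|))^m` and `⟨x, b(t,x)⟩ ≤ κ₃ + κ₄|x|² + κ₅|x|^{m+1}` with `κ₅ < 0`,
and `κ₆` satisfies `κ₄ + κ₅ < κ₆` if `m = 1` and `κ₆ < 0` if `m > 1`, then there are
`ε₀ ∈ (0,1)` and `C₁ > 0` such that for all `ε ∈ (0,ε₀)` and `(t,x) ∈ [0,∞) × ℝ^d`,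
`ε⁻¹ (⟨x, b_ε(t,x)⟩ + |b_ε(t,x)|²) ≤ κ₆ |x|² + C₁`. -/
theorem tamed_drift_dissipativity
    {d : ℕ} (b : ℝ → EuclideanSpace ℝ (Fin d) → EuclideanSpace ℝ (Fin d))
    (m κ₂ κ₃ κ₄ κ₅ κ₆ : ℝ)
    (hm : 1 ≤ m) (hκ₂ : 0 ≤ κ₂) (hκ₃ : 0 ≤ κ₃) (hκ₄ : 0 ≤ κ₄) (hκ₅ : κ₅ < 0)
    (hb_growth : ∀ t x, 0 ≤ t → ‖b t x‖ ≤ (κ₂ * (1 + ‖x‖)) ^ m)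
    (hb_diss : ∀ t x, 0 ≤ t → ⟪x, b t x⟫ ≤ κ₃ + κ₄ * ‖x‖ ^ 2 + κ₅ * ‖x‖ ^ (m + 1))
    (hκ₆₁ : m = 1 → κ₄ + κ₅ < κ₆) (hκ₆₂ : 1 < m → κ₆ < 0) :
    ∃ ε₀ ∈ Set.Ioo (0:ℝ) 1, ∃ C₁ > 0, ∀ ε ∈ Set.Ioo (0:ℝ) ε₀, ∀ t x, 0 ≤ t →
      ε⁻¹ * (⟪x, tameDrift b m ε t x⟫ + ‖tameDrift b m ε t x‖ ^ 2)
        ≤ κ₆ * ‖x‖ ^ 2 + C₁ :=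
  tamed_drift_dissipativity_general b m κ₂ κ₃ κ₄ κ₅ κ₆ hm hκ₂ hκ₃ hκ₄ hκ₅ hb_growth hb_diss hκ₆₁
end
end

section
/- Second-difference Hölder estimate for the polynomial weight (Lemma 3.10, labeled Le29): For every β ∈ (0,2] there is a constant C = C(β,d) > 0 such that for all x, y ∈ ℝ^d, | U_β(x+y) + U_β(x−y) − 2 U_β(x) | ≤ C |y|^β, where U_β(x) := (1 + |x|²)^{β/2}. -/
/-!
Write `q = β/2 ∈ (0,1]`, `W = 1 + |x|² + |y|²` and `f(t) = t^q`. Since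
`(1+|x+y|²) + (1+|x-y|²) = 2W`, concavity and subadditivity of `f` give
`f(1+|x+y|²) + f(1+|x-y|²) ≤ 2 f(W) ≤ 2 f(1+|x|²) + 2 |y|^β`.
For the other direction, AM-GM gives `f(1+|x+y|²) + f(1+|x-y|²) ≥ 2 f(P)^{1/2}` with
`P = (1+|x+y|²)(1+|x-y|²) = W² - 4⟨x,y⟩² ≥ W² - 4W|y|²`, and comparing the concave power
with its chord through the origin, `s^q ≥ (s/S) S^q` for `0 ≤ s ≤ S`, turns this into
`f(P)^{1/2} ≥ f(W) - 4 |y|^β`, while `f(W) ≥ f(1+|x|²)`.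
-/

open scoped RealInnerProductSpace

theorem two_mul_rpow_mul_le_rpow_add_rpow {a b q : ℝ} (ha : 0 ≤ a) (hb : 0 ≤ b) :
    2 * (a * b) ^ (q / 2) ≤ a ^ q + b ^ q := by
  have hsq : ∀ {c : ℝ}, 0 ≤ c → c ^ q = (c ^ (q / 2)) ^ 2 := fun hc => by
    rw [← Real.rpow_mul_natCast hc]; ring_nf
  rw [Real.mul_rpow ha hb, hsq ha, hsq hb]
  nlinarith [sq_nonneg (a ^ (q / 2) - b ^ (q / 2))]

theorem div_mul_rpow_le_rpow {a b q : ℝ} (ha : 0 ≤ a) (hab : a ≤ b) (hq : q ≤ 1) :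
    a / b * b ^ q ≤ a ^ q := by
  have hb : 0 ≤ b := ha.trans hab
  calc a / b * b ^ q ≤ (a / b) ^ q * b ^ q :=
        mul_le_mul_of_nonneg_right (Real.self_le_rpow_of_le_one (div_nonneg ha hb)
          (div_le_one_of_le₀ hab hb) hq) (Real.rpow_nonneg hb q)
    _ = a ^ q := by
        rw [← Real.mul_rpow (div_nonneg ha hb) hb,
          div_mul_cancel_of_imp fun h => le_antisymm (h ▸ hab) ha]

section PolyWeight

variable {E : Type*} [NormedAddCommGroup E] [InnerProductSpace ℝ E] {q : ℝ}

/-- The paper's `U_β` is `polyWeight (β / 2)`. -/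
noncomputable def polyWeight (q : ℝ) (x : E) : ℝ := (1 + ‖x‖ ^ 2) ^ q

theorem polyWeight_add_add_polyWeight_sub_le (hq0 : 0 ≤ q) (hq1 : q ≤ 1) (x y : E) :
    polyWeight q (x + y) + polyWeight q (x - y) ≤
      2 * polyWeight q x + 2 * (‖y‖ ^ 2) ^ q := by
  unfold polyWeight
  have hmid := (Real.concaveOn_rpow hq0 hq1).2
    (Set.mem_Ici.2 (by positivity : (0 : ℝ) ≤ 1 + ‖x + y‖ ^ 2))
    (Set.mem_Ici.2 (by positivity : (0 : ℝ) ≤ 1 + ‖x - y‖ ^ 2))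
    (by norm_num : (0 : ℝ) ≤ 1 / 2) (by norm_num : (0 : ℝ) ≤ 1 / 2) (by norm_num)
  have hmean : (1 / 2 : ℝ) • (1 + ‖x + y‖ ^ 2) + (1 / 2 : ℝ) • (1 + ‖x - y‖ ^ 2) =
      (1 + ‖x‖ ^ 2) + ‖y‖ ^ 2 := by
    rw [smul_eq_mul, smul_eq_mul, norm_add_sq_real, norm_sub_sq_real]; ring
  rw [hmean, smul_eq_mul, smul_eq_mul] at hmid
  have hsub := Real.rpow_add_le_add_rpow (by positivity : (0 : ℝ) ≤ 1 + ‖x‖ ^ 2)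
    (sq_nonneg ‖y‖) hq0 hq1
  linarith

theorem le_polyWeight_add_add_polyWeight_sub (hq0 : 0 ≤ q) (hq1 : q ≤ 1) (x y : E) :
    2 * polyWeight q x - 8 * (‖y‖ ^ 2) ^ q ≤
      polyWeight q (x + y) + polyWeight q (x - y) := by
  unfold polyWeight
  set W := 1 + ‖x‖ ^ 2 + ‖y‖ ^ 2 with hW
  set P := (1 + ‖x + y‖ ^ 2) * (1 + ‖x - y‖ ^ 2) with hP
  have hWpos : 0 < W := by positivity
  have hyW : ‖y‖ ^ 2 ≤ W := by nlinarith [sq_nonneg ‖x‖]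
  have hprod : P = W ^ 2 - 4 * ⟪x, y⟫ ^ 2 := by
    rw [hP, norm_add_sq_real, norm_sub_sq_real]; ring
  have hinner : ⟪x, y⟫ ^ 2 ≤ W * ‖y‖ ^ 2 := by
    have h := pow_le_pow_left₀ (abs_nonneg _) (abs_real_inner_le_norm x y) 2
    rw [sq_abs] at h
    nlinarith [sq_nonneg ‖y‖]
  have hP_ge : (1 - 4 * (‖y‖ ^ 2 / W)) * W ^ q ≤ P ^ (q / 2) := by
    have hchord := div_mul_rpow_le_rpow (q := q / 2) (by positivity : 0 ≤ P)
      (by nlinarith [sq_nonneg ⟪x, y⟫] : P ≤ W ^ 2) (by linarith)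
    have hWq : (W ^ 2) ^ (q / 2) = W ^ q := by
      rw [← Real.rpow_natCast, ← Real.rpow_mul hWpos.le]; push_cast; ring_nf
    rw [hWq] at hchord
    have hratio : 1 - 4 * (‖y‖ ^ 2 / W) ≤ P / W ^ 2 := by
      rw [le_div_iff₀ (by positivity)]
      field_simp
      nlinarith
    calc (1 - 4 * (‖y‖ ^ 2 / W)) * W ^ q ≤ P / W ^ 2 * W ^ q :=
          mul_le_mul_of_nonneg_right hratio (Real.rpow_nonneg hWpos.le q)
      _ ≤ P ^ (q / 2) := hchord
  have hy_chord := div_mul_rpow_le_rpow (sq_nonneg ‖y‖) hyW hq1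
  have hmono : (1 + ‖x‖ ^ 2) ^ q ≤ W ^ q :=
    Real.rpow_le_rpow (by positivity) (by linarith [sq_nonneg ‖y‖]) hq0
  have hamgm := two_mul_rpow_mul_le_rpow_add_rpow (q := q)
    (by positivity : (0 : ℝ) ≤ 1 + ‖x + y‖ ^ 2) (by positivity : (0 : ℝ) ≤ 1 + ‖x - y‖ ^ 2)
  linarith

theorem abs_polyWeight_second_diff_le (hq0 : 0 ≤ q) (hq1 : q ≤ 1) (x y : E) :
    |polyWeight q (x + y) + polyWeight q (x - y) - 2 * polyWeight q x| ≤
      8 * (‖y‖ ^ 2) ^ q := by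
  have hupper := polyWeight_add_add_polyWeight_sub_le hq0 hq1 x y
  have hlower := le_polyWeight_add_add_polyWeight_sub hq0 hq1 x y
  have hy : 0 ≤ (‖y‖ ^ 2) ^ q := Real.rpow_nonneg (sq_nonneg _) q
  exact abs_le.2 ⟨by linarith, by linarith⟩

end PolyWeight

/-- **Lemma 3.10 (Le29): second-difference Hölder estimate for the polynomial weight
`U_β(x) = (1+|x|²)^{β/2}`.** For every `β ∈ (0,2]` there is `C = C(β,d) > 0` such that
`|U_β(x+y) + U_β(x−y) − 2U_β(x)| ≤ C |y|^β` for all `x, y ∈ ℝ^d`. -/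
theorem polynomial_weight_second_difference
    (d : ℕ) (β : ℝ) (hβ : β ∈ Set.Ioc (0:ℝ) 2) :
    ∃ C > 0, ∀ x y : EuclideanSpace ℝ (Fin d),
      |(1 + ‖x + y‖ ^ 2) ^ (β / 2) + (1 + ‖x - y‖ ^ 2) ^ (β / 2)
          - 2 * (1 + ‖x‖ ^ 2) ^ (β / 2)| ≤ C * ‖y‖ ^ β := by
  refine ⟨8, by norm_num, fun x y => ?_⟩
  have hy : ‖y‖ ^ β = (‖y‖ ^ 2) ^ (β / 2) := by
    rw [← Real.rpow_natCast, ← Real.rpow_mul (norm_nonneg y)]; push_cast; ring_nf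
  rw [hy]
  exact abs_polyWeight_second_diff_le (by linarith [hβ.1]) (by linarith [hβ.2]) x y
end

section
/- Beale–Kato–Majda-type logarithmic estimate for the singular part of the Biot–Savart kernel (Lemma 4.3, labeled Le46): Let H : ℝ²\{0} → ℝ² be H(y) := (−y₂, y₁)/(2π|y|²) and let ∇H denote its (2×2 matrix-valued) derivative, so that |∇H(y)| ≤ 4|y|^{−2}. For every γ ∈ (0,1] there is a constant C = C(γ) > 0 with the following property: for every bounded measurable w : ℝ² → ℝ with finite Hölder seminorm [w]_γ := sup_{x≠y} |w(x) − w(y)|/|x−y|^γ, setting δ := (1 + [w]_γ)^{−1}, one has for every x ∈ ℝ², | ∫_{|y|≤δ} ∇H(y) (w(x−y) − w(x)) dy + ∫_{δ<|y|≤π} ∇H(y) w(x−y) dy | ≤ C ( 1 + ‖w‖_∞ (1 + log(1 + [w]_γ)) ). (Both integrals converge absolutely: the first since |∇H(y)||w(x−y)−w(x)| ≤ 4[w]_γ |y|^{γ−2}, the second since ∇H is bounded on {δ < |y| ≤ π}.) -/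
/-!
Near the origin, in `|y| ≤ ρ := (1 + [w]_γ)^(-1/γ)`, the Hölder bound makes the integrand
`≤ [w]_γ |y|^γ / (2π|y|²)`, whose integral `[w]_γ ρ^γ / γ = [w]_γ / ((1 + [w]_γ) γ)` is at most
`1 / γ`. On the annuli `ρ < |y| ≤ δ` and `δ < |y| ≤ π` only `|w| ≤ ‖w‖_∞` is used, and
`∫ dy / (2π|y|²)` over `a < |y| ≤ b` is `log (b / a)`; since `δ / ρ` and `π / δ` are powers of
`1 + [w]_γ` up to a constant, this produces the logarithm. The integrals are computed in polar
coordinates, and `‖∇H(y)‖ ≤ 1 / (2π|y|²)` holds because `H` is a rotation of the inversion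
`y ↦ y / |y|²`, scaled by `1 / 2π`.
-/

open MeasureTheory
open scoped ENNReal

noncomputable section

/-- The singular part of the Biot–Savart kernel:
`H(y) = (−y₂, y₁) / (2π|y|²)`. -/
def biotSavartH (y : EuclideanSpace ℝ (Fin 2)) : EuclideanSpace ℝ (Fin 2) :=
  (2 * Real.pi * ‖y‖ ^ 2)⁻¹ • (EuclideanSpace.equiv (Fin 2) ℝ).symm ![-(y 1), y 0]

open Metric Set Module Real

lemma indicator_norm_preimage {E F : Type*} [Norm E] [Zero F] (f : ℝ → F) (s : Set ℝ) :
    ((‖·‖) ⁻¹' s).indicator (fun y : E ↦ f ‖y‖) = fun y ↦ s.indicator f ‖y‖ :=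
  funext fun _ ↦ indicator_comp_right (‖·‖)

section Radial

variable {E F : Type*} [NormedAddCommGroup E] [NormedSpace ℝ E] [FiniteDimensional ℝ E]
  [MeasurableSpace E] [BorelSpace E] [Nontrivial E] (μ : Measure E) [μ.IsAddHaarMeasure]
  [NormedAddCommGroup F] [NormedSpace ℝ F]

lemma integrableOn_norm_preimage_iff {f : ℝ → F} {s : Set ℝ} (hs : MeasurableSet s) :
    IntegrableOn (fun y : E ↦ f ‖y‖) ((‖·‖) ⁻¹' s) μ ↔
      IntegrableOn (fun r : ℝ ↦ r ^ (finrank ℝ E - 1) • f r) (Ioi 0 ∩ s) := by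
  rw [← integrable_indicator_iff (hs.preimage measurable_norm), indicator_norm_preimage,
    integrable_fun_norm_addHaar, IntegrableOn, ← indicator_smul, integrable_indicator_iff hs,
    IntegrableOn, Measure.restrict_restrict hs, inter_comm]
  rfl

lemma setIntegral_norm_preimage (f : ℝ → F) {s : Set ℝ} (hs : MeasurableSet s) :
    ∫ y in (‖·‖) ⁻¹' s, f ‖y‖ ∂μ =
      finrank ℝ E • μ.real (ball 0 1) • ∫ r in Ioi 0 ∩ s, r ^ (finrank ℝ E - 1) • f r := by
  rw [← integral_indicator (hs.preimage measurable_norm), indicator_norm_preimage,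
    integral_fun_norm_addHaar, ← setIntegral_indicator hs, indicator_smul]

end Radial

local notation "ℝ²" => EuclideanSpace ℝ (Fin 2)

section Plane

lemma volume_real_ball_zero_one_fin_two : volume.real (ball (0 : ℝ²) 1) = π := by
  simp [Measure.real, pi_nonneg]

lemma integrableOn_norm_preimage_iff_fin_two {f : ℝ → ℝ} {s : Set ℝ} (hs : MeasurableSet s) :
    IntegrableOn (fun y : ℝ² ↦ f ‖y‖) ((‖·‖) ⁻¹' s) ↔
      IntegrableOn (fun r ↦ r * f r) (Ioi 0 ∩ s) := by
  simpa using integrableOn_norm_preimage_iff volume (E := ℝ²) (F := ℝ) hs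

lemma setIntegral_norm_preimage_fin_two (f : ℝ → ℝ) {s : Set ℝ} (hs : MeasurableSet s) :
    ∫ y in ((‖·‖) ⁻¹' s : Set ℝ²), f ‖y‖ = 2 * π * ∫ r in Ioi 0 ∩ s, r * f r := by
  simp [setIntegral_norm_preimage volume f hs, volume_real_ball_zero_one_fin_two, mul_assoc]

lemma closedBall_zero_eq_norm_preimage_Iic {E : Type*} [SeminormedAddCommGroup E] (ρ : ℝ) :
    closedBall (0 : E) ρ = (‖·‖) ⁻¹' Iic ρ := by
  ext; simp

lemma Ioi_zero_inter_Ioc {a : ℝ} (ha : 0 ≤ a) (b : ℝ) : Ioi 0 ∩ Ioc a b = Ioc a b :=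
  inter_eq_right.mpr fun _ hr ↦ ha.trans_lt hr.1

lemma eqOn_mul_rpow_div_two_pi_sq (γ : ℝ) :
    EqOn (fun r : ℝ ↦ r * (r ^ γ / (2 * π * r ^ 2))) (fun r ↦ (2 * π)⁻¹ * r ^ (γ - 1))
      (Ioi 0) := by
  intro r (hr : 0 < r)
  simp only
  rw [rpow_sub_one hr.ne']
  field_simp

lemma eqOn_mul_inv_two_pi_sq :
    EqOn (fun r : ℝ ↦ r * (2 * π * r ^ 2)⁻¹) (fun r ↦ (2 * π)⁻¹ * r⁻¹) (Ioi 0) := by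
  intro r (hr : 0 < r)
  simp only
  field_simp

lemma integrableOn_closedBall_rpow_div_sq {γ : ℝ} (hγ : 0 < γ) (ρ : ℝ) :
    IntegrableOn (fun y : ℝ² ↦ ‖y‖ ^ γ / (2 * π * ‖y‖ ^ 2)) (closedBall 0 ρ) := by
  rw [closedBall_zero_eq_norm_preimage_Iic,
    integrableOn_norm_preimage_iff_fin_two (f := fun r ↦ r ^ γ / (2 * π * r ^ 2))
      measurableSet_Iic,
    Ioi_inter_Iic, integrableOn_congr_fun
      ((eqOn_mul_rpow_div_two_pi_sq γ).mono Ioc_subset_Ioi_self) measurableSet_Ioc]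
  exact (((intervalIntegral.intervalIntegrable_rpow' (by linarith)).const_mul _).1).mono_set
    Ioc_subset_uIoc

lemma setIntegral_closedBall_rpow_div_sq {γ ρ : ℝ} (hγ : 0 < γ) (hρ : 0 ≤ ρ) :
    ∫ y in closedBall (0 : ℝ²) ρ, ‖y‖ ^ γ / (2 * π * ‖y‖ ^ 2) = ρ ^ γ / γ := by
  rw [closedBall_zero_eq_norm_preimage_Iic,
    setIntegral_norm_preimage_fin_two (fun r ↦ r ^ γ / (2 * π * r ^ 2)) measurableSet_Iic,
    Ioi_inter_Iic, setIntegral_congr_fun measurableSet_Ioc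
      ((eqOn_mul_rpow_div_two_pi_sq γ).mono Ioc_subset_Ioi_self),
    ← intervalIntegral.integral_of_le hρ, intervalIntegral.integral_const_mul,
    integral_rpow (by left; linarith)]
  simp [zero_rpow hγ.ne']
  field_simp

lemma integrableOn_annulus_inv_sq {a : ℝ} (ha : 0 < a) (b : ℝ) :
    IntegrableOn (fun y : ℝ² ↦ (2 * π * ‖y‖ ^ 2)⁻¹) {y | a < ‖y‖ ∧ ‖y‖ ≤ b} := by
  change IntegrableOn _ ((‖·‖) ⁻¹' Ioc a b : Set ℝ²)
  rw [integrableOn_norm_preimage_iff_fin_two (f := fun r ↦ (2 * π * r ^ 2)⁻¹) measurableSet_Ioc,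
    Ioi_zero_inter_Ioc ha.le, integrableOn_congr_fun
      (eqOn_mul_inv_two_pi_sq.mono fun r hr ↦ ha.trans hr.1) measurableSet_Ioc]
  refine (ContinuousOn.integrableOn_Icc ?_).mono_set Ioc_subset_Icc_self
  exact continuousOn_const.mul (continuousOn_inv₀.mono fun r hr ↦ (ha.trans_le hr.1).ne')

lemma setIntegral_annulus_inv_sq {a b : ℝ} (ha : 0 < a) (hab : a ≤ b) :
    ∫ y in {y : ℝ² | a < ‖y‖ ∧ ‖y‖ ≤ b}, (2 * π * ‖y‖ ^ 2)⁻¹ = log (b / a) := by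
  change ∫ y in ((‖·‖) ⁻¹' Ioc a b : Set ℝ²), _ = _
  rw [setIntegral_norm_preimage_fin_two (fun r ↦ (2 * π * r ^ 2)⁻¹) measurableSet_Ioc,
    Ioi_zero_inter_Ioc ha.le, setIntegral_congr_fun measurableSet_Ioc
      (eqOn_mul_inv_two_pi_sq.mono fun r hr ↦ ha.trans hr.1),
    ← intervalIntegral.integral_of_le hab, intervalIntegral.integral_const_mul,
    integral_inv_of_pos ha (ha.trans_le hab)]
  field_simp

end Plane

section Kernel

variable {F : Type*} [NormedAddCommGroup F] [NormedSpace ℝ F] {k : ℝ² → F} {g : ℝ² → ℝ}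

lemma norm_smul_le_of_abs_le_rpow {L γ : ℝ} (hk : ∀ y ≠ 0, ‖k y‖ ≤ (2 * π * ‖y‖ ^ 2)⁻¹)
    (hγ : 0 < γ) (hg : ∀ y, |g y| ≤ L * ‖y‖ ^ γ) (y : ℝ²) :
    ‖g y • k y‖ ≤ L * (‖y‖ ^ γ / (2 * π * ‖y‖ ^ 2)) := by
  rcases eq_or_ne y 0 with rfl | hy
  · have hg0 : g 0 = 0 := abs_nonpos_iff.mp (by simpa [zero_rpow hγ.ne'] using hg 0)
    simp [hg0]
  · rw [norm_smul, Real.norm_eq_abs, div_eq_mul_inv, ← mul_assoc]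
    exact mul_le_mul (hg y) (hk y hy) (norm_nonneg _) ((abs_nonneg _).trans (hg y))

lemma norm_smul_le_of_abs_le {M : ℝ} (hk : ∀ y ≠ 0, ‖k y‖ ≤ (2 * π * ‖y‖ ^ 2)⁻¹)
    (hg : ∀ y, |g y| ≤ M) {y : ℝ²} (hy : y ≠ 0) :
    ‖g y • k y‖ ≤ M * (2 * π * ‖y‖ ^ 2)⁻¹ := by
  rw [norm_smul, Real.norm_eq_abs]
  exact mul_le_mul (hg y) (hk y hy) (norm_nonneg _) ((abs_nonneg _).trans (hg y))

lemma integrableOn_closedBall_smul {L γ : ℝ} (hk_meas : AEStronglyMeasurable k)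
    (hk : ∀ y ≠ 0, ‖k y‖ ≤ (2 * π * ‖y‖ ^ 2)⁻¹) (hγ : 0 < γ) (hg_meas : AEStronglyMeasurable g)
    (hg : ∀ y, |g y| ≤ L * ‖y‖ ^ γ) (ρ : ℝ) :
    IntegrableOn (fun y ↦ g y • k y) (closedBall 0 ρ) :=
  ((integrableOn_closedBall_rpow_div_sq hγ ρ).const_mul L).mono' (hg_meas.smul hk_meas).restrict
    (ae_of_all _ (norm_smul_le_of_abs_le_rpow hk hγ hg))

lemma norm_setIntegral_closedBall_smul_le {L γ ρ : ℝ}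
    (hk : ∀ y ≠ 0, ‖k y‖ ≤ (2 * π * ‖y‖ ^ 2)⁻¹) (hγ : 0 < γ) (hg : ∀ y, |g y| ≤ L * ‖y‖ ^ γ)
    (hρ : 0 ≤ ρ) :
    ‖∫ y in closedBall 0 ρ, g y • k y‖ ≤ L * (ρ ^ γ / γ) := by
  calc _ ≤ ∫ y in closedBall 0 ρ, L * (‖y‖ ^ γ / (2 * π * ‖y‖ ^ 2)) :=
        norm_integral_le_of_norm_le ((integrableOn_closedBall_rpow_div_sq hγ ρ).const_mul L)
          (ae_of_all _ (norm_smul_le_of_abs_le_rpow hk hγ hg))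
    _ = L * (ρ ^ γ / γ) := by
        rw [integral_const_mul, setIntegral_closedBall_rpow_div_sq hγ hρ]

lemma measurableSet_annulus (a b : ℝ) : MeasurableSet {y : ℝ² | a < ‖y‖ ∧ ‖y‖ ≤ b} :=
  measurableSet_Ioc.preimage measurable_norm

lemma integrableOn_annulus_smul {M a : ℝ} (hk_meas : AEStronglyMeasurable k)
    (hk : ∀ y ≠ 0, ‖k y‖ ≤ (2 * π * ‖y‖ ^ 2)⁻¹) (hg_meas : AEStronglyMeasurable g)
    (hg : ∀ y, |g y| ≤ M) (ha : 0 < a) (b : ℝ) :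
    IntegrableOn (fun y ↦ g y • k y) {y | a < ‖y‖ ∧ ‖y‖ ≤ b} :=
  ((integrableOn_annulus_inv_sq ha b).const_mul M).mono' (hg_meas.smul hk_meas).restrict
    (ae_restrict_of_forall_mem (measurableSet_annulus a b) fun _ hy ↦
      norm_smul_le_of_abs_le hk hg (norm_pos_iff.mp (ha.trans hy.1)))

lemma norm_setIntegral_annulus_smul_le {M a b : ℝ}
    (hk : ∀ y ≠ 0, ‖k y‖ ≤ (2 * π * ‖y‖ ^ 2)⁻¹) (hg : ∀ y, |g y| ≤ M) (ha : 0 < a)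
    (hab : a ≤ b) :
    ‖∫ y in {y : ℝ² | a < ‖y‖ ∧ ‖y‖ ≤ b}, g y • k y‖ ≤ M * log (b / a) := by
  calc _ ≤ ∫ y in {y : ℝ² | a < ‖y‖ ∧ ‖y‖ ≤ b}, M * (2 * π * ‖y‖ ^ 2)⁻¹ :=
        norm_integral_le_of_norm_le ((integrableOn_annulus_inv_sq ha b).const_mul M)
          (ae_restrict_of_forall_mem (measurableSet_annulus a b) fun _ hy ↦
            norm_smul_le_of_abs_le hk hg (norm_pos_iff.mp (ha.trans hy.1)))
    _ = M * log (b / a) := by rw [integral_const_mul, setIntegral_annulus_inv_sq ha hab]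

end Kernel

lemma closedBall_zero_eq_union_annulus {E : Type*} [SeminormedAddCommGroup E] {ρ δ : ℝ}
    (h : ρ ≤ δ) : closedBall (0 : E) δ = closedBall 0 ρ ∪ {y | ρ < ‖y‖ ∧ ‖y‖ ≤ δ} := by
  ext y
  simp only [mem_closedBall_zero_iff, mem_union, mem_ofPred_eq]
  constructor
  · intro hy
    exact (le_or_gt ‖y‖ ρ).imp id fun h' ↦ ⟨h', hy⟩
  · rintro (hy | hy)
    exacts [hy.trans h, hy.2]

lemma disjoint_closedBall_annulus {E : Type*} [SeminormedAddCommGroup E] (ρ δ : ℝ) :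
    Disjoint (closedBall (0 : E) ρ) {y | ρ < ‖y‖ ∧ ‖y‖ ≤ δ} :=
  disjoint_left.mpr fun _ hy hy' ↦ (mem_closedBall_zero_iff.mp hy).not_gt hy'.1

lemma norm_integral_add_integral_smul_le_of_le {F : Type*} [NormedAddCommGroup F]
    [NormedSpace ℝ F] {k : ℝ² → F} (hk_meas : AEStronglyMeasurable k)
    (hk : ∀ y ≠ 0, ‖k y‖ ≤ (2 * π * ‖y‖ ^ 2)⁻¹) {γ : ℝ} (hγ : 0 < γ) {w : ℝ² → ℝ} {M L : ℝ}
    (hw_meas : Measurable w) (hwM : ∀ x, |w x| ≤ M) (hw : ∀ x y, |w x - w y| ≤ L * ‖x - y‖ ^ γ)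
    {ρ δ R : ℝ} (hρ : 0 < ρ) (hρδ : ρ ≤ δ) (hδR : δ ≤ R) (x : ℝ²) :
    ‖(∫ y in closedBall (0 : ℝ²) δ, (w (x - y) - w x) • k y) +
        ∫ y in {y : ℝ² | δ < ‖y‖ ∧ ‖y‖ ≤ R}, w (x - y) • k y‖
      ≤ L * (ρ ^ γ / γ) + 2 * M * log (δ / ρ) + M * log (R / δ) := by
  set g : ℝ² → ℝ := fun y ↦ w (x - y) - w x
  have hg_meas : AEStronglyMeasurable g :=
    ((hw_meas.comp (measurable_const.sub measurable_id)).sub_const _).aestronglyMeasurable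
  have hg_holder : ∀ y, |g y| ≤ L * ‖y‖ ^ γ := fun y ↦ by simpa [g] using hw (x - y) x
  have hg_osc : ∀ y, |g y| ≤ 2 * M := fun y ↦
    (abs_sub _ _).trans (by linarith [hwM (x - y), hwM x])
  rw [closedBall_zero_eq_union_annulus hρδ, setIntegral_union (disjoint_closedBall_annulus ρ δ)
    (measurableSet_annulus ρ δ) (integrableOn_closedBall_smul hk_meas hk hγ hg_meas hg_holder ρ)
    (integrableOn_annulus_smul hk_meas hk hg_meas hg_osc hρ δ)]
  refine norm_add₃_le.trans (add_le_add_three ?_ ?_ ?_)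
  · exact norm_setIntegral_closedBall_smul_le hk hγ hg_holder hρ.le
  · exact norm_setIntegral_annulus_smul_le hk hg_osc hρ hρδ
  · exact norm_setIntegral_annulus_smul_le hk (fun y ↦ hwM (x - y)) (hρ.trans_le hρδ) hδR

lemma log_pi_le_two : log π ≤ 2 := by
  rw [log_le_iff_le_exp pi_pos]
  linarith [pi_lt_four, quadratic_le_exp_of_nonneg zero_le_two]

theorem norm_integral_add_integral_smul_le_log {F : Type*} [NormedAddCommGroup F]
    [NormedSpace ℝ F] {k : ℝ² → F} (hk_meas : AEStronglyMeasurable k)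
    (hk : ∀ y ≠ 0, ‖k y‖ ≤ (2 * π * ‖y‖ ^ 2)⁻¹) {γ : ℝ} (hγ : γ ∈ Ioc 0 1) {w : ℝ² → ℝ}
    {M L : ℝ} (hw_meas : Measurable w) (hwM : ∀ x, |w x| ≤ M) (hL : 0 ≤ L)
    (hw : ∀ x y, |w x - w y| ≤ L * ‖x - y‖ ^ γ) (x : ℝ²) :
    ‖(∫ y in closedBall (0 : ℝ²) (1 + L)⁻¹, (w (x - y) - w x) • k y) +
        ∫ y in {y : ℝ² | (1 + L)⁻¹ < ‖y‖ ∧ ‖y‖ ≤ π}, w (x - y) • k y‖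
      ≤ 2 / γ * (1 + M * (1 + log (1 + L))) := by
  obtain ⟨hγ0, hγ1⟩ := hγ
  have hγ_inv : 1 ≤ γ⁻¹ := one_le_inv₀ hγ0 |>.mpr hγ1
  have hL1 : 1 ≤ 1 + L := by linarith
  have hM : 0 ≤ M := (abs_nonneg _).trans (hwM 0)
  have hΛ : 0 ≤ log (1 + L) := log_nonneg hL1
  have hρ : 0 < (1 + L) ^ (-γ⁻¹) := by positivity
  have hρδ : (1 + L) ^ (-γ⁻¹) ≤ (1 + L)⁻¹ := by
    rw [← rpow_neg_one (1 + L)]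
    exact rpow_le_rpow_of_exponent_le hL1 (by linarith)
  have hδπ : (1 + L)⁻¹ ≤ π := (inv_le_one_of_one_le₀ hL1).trans (by linarith [pi_gt_three])
  refine (norm_integral_add_integral_smul_le_of_le hk_meas hk hγ0 hw_meas hwM hw
    hρ hρδ hδπ x).trans ?_
  have hρ_pow : ((1 + L) ^ (-γ⁻¹)) ^ γ = (1 + L)⁻¹ := by
    rw [← rpow_mul (by positivity), neg_mul, inv_mul_cancel₀ hγ0.ne', rpow_neg_one]
  have hlog_δρ : log ((1 + L)⁻¹ / (1 + L) ^ (-γ⁻¹)) = (γ⁻¹ - 1) * log (1 + L) := by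
    rw [log_div (by positivity) hρ.ne', log_inv, log_rpow (by positivity)]
    ring
  have hlog_πδ : log (π / (1 + L)⁻¹) ≤ 2 + log (1 + L) := by
    rw [log_div pi_pos.ne' (by positivity), log_inv]
    linarith [log_pi_le_two]
  have hLδ : L * (1 + L)⁻¹ ≤ 1 := by
    rw [← div_eq_mul_inv, div_le_one (by positivity)]
    linarith
  calc _ ≤ γ⁻¹ + 2 * M * ((γ⁻¹ - 1) * log (1 + L)) + M * (2 + log (1 + L)) := by
        rw [hρ_pow, hlog_δρ, ← mul_div_assoc, div_eq_mul_inv]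
        gcongr
        exact mul_le_of_le_one_left (by positivity) hLδ
    _ ≤ 2 / γ * (1 + M * (1 + log (1 + L))) := by
        rw [div_eq_mul_inv]
        nlinarith [mul_le_mul_of_nonneg_left hγ_inv hM, mul_nonneg hM hΛ, inv_pos.mpr hγ0]

def rotateQuarter : ℝ² →ₗᵢ[ℝ] ℝ² where
  toFun y := !₂[-(y 1), y 0]
  map_add' y z := by ext i; fin_cases i <;> simp [add_comm]
  map_smul' c y := by ext i; fin_cases i <;> simp
  norm_map' y := by simp [EuclideanSpace.norm_eq, Fin.sum_univ_two, add_comm]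

lemma biotSavartH_eq_smul_rotateQuarter_inversion :
    biotSavartH = fun y ↦ (2 * π)⁻¹ • rotateQuarter (EuclideanGeometry.inversion 0 1 y) := by
  ext y i
  fin_cases i <;> simp [biotSavartH, rotateQuarter, EuclideanGeometry.inversion] <;> ring

lemma norm_fderiv_biotSavartH_le {y : ℝ²} (hy : y ≠ 0) :
    ‖fderiv ℝ biotSavartH y‖ ≤ (2 * π * ‖y‖ ^ 2)⁻¹ := by
  have hD : HasFDerivAt biotSavartH ((2 * π)⁻¹ • rotateQuarter.toContinuousLinearMap.comp
      ((1 / dist y 0) ^ 2 • ((ℝ ∙ (y - 0))ᗮ.reflection : ℝ² →L[ℝ] ℝ²))) y := by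
    rw [biotSavartH_eq_smul_rotateQuarter_inversion]
    exact (rotateQuarter.toContinuousLinearMap.hasFDerivAt.comp y
      (EuclideanGeometry.hasFDerivAt_inversion hy)).const_smul (2 * π)⁻¹
  rw [hD.fderiv, norm_smul, LinearIsometry.norm_toContinuousLinearMap_comp, norm_smul]
  calc _ ≤ ‖(2 * π)⁻¹‖ * (‖(1 / dist y 0) ^ 2‖ * 1) := by
        gcongr
        exact (ℝ ∙ (y - 0))ᗮ.reflection.toLinearIsometry.norm_toContinuousLinearMap_le
    _ = (2 * π * ‖y‖ ^ 2)⁻¹ := by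
        rw [dist_zero_right, Real.norm_of_nonneg (by positivity),
          Real.norm_of_nonneg (by positivity)]
        field_simp

/-- **Lemma 4.3 (Le46): Beale–Kato–Majda-type logarithmic estimate for the singular part
of the Biot–Savart kernel.** For every `γ ∈ (0,1]` there is `C = C(γ) > 0` such that for
every bounded measurable `w : ℝ² → ℝ` with `|w| ≤ Mw` and Hölder bound
`|w(x) − w(y)| ≤ Lγ |x−y|^γ`, setting `δ := (1 + Lγ)⁻¹`, one has for every `x`:
`‖∫_{|y|≤δ} ∇H(y)(w(x−y) − w(x)) dy + ∫_{δ<|y|≤π} ∇H(y) w(x−y) dy‖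
  ≤ C (1 + Mw (1 + log(1 + Lγ)))`. -/
theorem biot_savart_log_estimate (γ : ℝ) (hγ : γ ∈ Set.Ioc (0:ℝ) 1) :
    ∃ C > 0, ∀ (w : EuclideanSpace ℝ (Fin 2) → ℝ) (Mw Lγ : ℝ),
      Measurable w → (∀ x, |w x| ≤ Mw) → 0 ≤ Lγ →
      (∀ x y, |w x - w y| ≤ Lγ * ‖x - y‖ ^ γ) →
      ∀ x : EuclideanSpace ℝ (Fin 2),
        ‖(∫ y in Metric.closedBall (0 : EuclideanSpace ℝ (Fin 2)) (1 + Lγ)⁻¹,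
              (w (x - y) - w x) • fderiv ℝ biotSavartH y) +
            ∫ y in {y : EuclideanSpace ℝ (Fin 2) | (1 + Lγ)⁻¹ < ‖y‖ ∧ ‖y‖ ≤ Real.pi},
              w (x - y) • fderiv ℝ biotSavartH y‖
          ≤ C * (1 + Mw * (1 + Real.log (1 + Lγ))) :=
  ⟨2 / γ, div_pos two_pos hγ.1, fun _ _ _ hw_meas hwM hL hw x ↦
    norm_integral_add_integral_smul_le_log (measurable_fderiv ℝ biotSavartH).aestronglyMeasurable
      (fun _ ↦ norm_fderiv_biotSavartH_le) hγ hw_meas hwM hL hw x⟩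
end
end
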